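/- arXiv:1512.05505 — 2 statements merged into one kernel-verified Lean document; each statement's English description precedes it below -/
import Mathlib

section
/- Let X(z) be a PGF analytic in |z| < r, r > 1, such that |X(z)| < X(r₁) for all |z| = r₁ with z ≠ r₁, for every r₁ ∈ (0, r). Then for positive integers n, s with 0 < nX'(1) < s, the function z^s - X(z)^n has z = 1 as its only zero on the unit circle |z| = 1. -/
/-- If the PGF `X` has a strict maximum of modulus on each circle `|z| = r₁ < r` at
the positive real point, and `0 < n X'(1) < s`, then `z = 1` is the only zero of
`z^s - X(z)^n` on the unit circle. -/
theorem unique_zero_on_unit_circle (p : ℕ → ℝ) (hp : ∀ j, 0 ≤ p j) (hsum : HasSum p 1)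
    (r : ℝ) (hr : 1 < r) (X : ℂ → ℂ)
    (hX : ∀ z : ℂ, ‖z‖ < r → HasSum (fun j => (p j : ℂ) * z ^ j) (X z))
    (hmax : ∀ r₁ ∈ Set.Ioo (0 : ℝ) r, ∀ z : ℂ, ‖z‖ = r₁ → z ≠ (r₁ : ℂ) →
      ‖X z‖ < ‖X (r₁ : ℂ)‖)
    (n s : ℕ) (hn : 0 < n) (hs : 0 < s) (μ : ℝ)
    (hmean : HasSum (fun j : ℕ => (j : ℝ) * p j) μ) (hμ : 0 < (n : ℝ) * μ)
    (hμs : (n : ℝ) * μ < s) :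
    ∀ z : ℂ, ‖z‖ = 1 → (z ^ s - (X z) ^ n = 0 ↔ z = 1) := by
  -- First: X 1 = 1
  have h1 : ‖(1 : ℂ)‖ < r := by simpa using hr
  have hX1 : HasSum (fun j => (p j : ℂ) * (1 : ℂ) ^ j) (X 1) := hX 1 h1
  have hX1' : HasSum (fun j => (p j : ℂ)) (X 1) := by simpa using hX1
  have hcast : HasSum (fun j => (p j : ℂ)) 1 := by
    have := Complex.ofRealCLM.hasSum hsum
    simpa using this
  have hXeq : X 1 = 1 := hX1'.unique hcast
  intro z hz
  constructor
  · intro hzero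
    by_contra hne
    have hmax' := hmax 1 ⟨zero_lt_one, hr⟩ z (by simpa using hz) (by simpa using hne)
    have hlt : ‖X z‖ < 1 := by
      simpa [hXeq] using hmax'
    have heq : (X z) ^ n = z ^ s := (sub_eq_zero.mp hzero).symm
    have hnorm : ‖X z‖ ^ n = 1 := by
      have : ‖(X z) ^ n‖ = ‖z ^ s‖ := by rw [heq]
      simpa [norm_pow, hz] using this
    have : ‖X z‖ ^ n < 1 := pow_lt_one₀ (norm_nonneg _) hlt hn.ne'
    linarith [hnorm]
  · intro hz1
    simp [hz1, hXeq]
end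

section
/- Let v be a complex number satisfying the quadratic relation (σ²/2μ)v² - (γ/√s)v + iu/s = E where E = O(v²/√s) + O(v³), with μ, σ², γ, s > 0 and u real with |u| = o(s). Then v = (γμ/(σ²√s)) ± (γμ/(σ²√s))(1 - 2iuσ²/(γ²μ))^{1/2} + O((|v|² + |v|³√s)/√(1+|u|)). -/
/-!
Dividing by `σ²/2μ` and completing the square turns the relation into
`(v - r)² = (r √R)² + E/(σ²/2μ)` with `r = γμ/(σ²√s)` and `R = 1 - 2iuσ²/(γ²μ)`.
Whenever `w² = c² + δ` and `Re c > 0`, one of `w - c`, `w + c` is at most `|δ| / Re c`, because the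
other factor of `(w - c)(w + c) = δ` has real part of modulus at least `Re c` (choose the sign by the
sign of `Re w`). Here `Re √R = √((|R| + 1)/2) ≳ √(1 + |u|)`, which is the source of the gain
`1/√(1 + |u|)`.
-/

open Filter Complex

theorem exists_sign_norm_sub_le_of_sq_eq_sq_add {w c δ : ℂ} (h : w ^ 2 = c ^ 2 + δ)
    (hc : 0 < c.re) : ∃ ε : ℂ, (ε = 1 ∨ ε = -1) ∧ ‖w - ε * c‖ ≤ ‖δ‖ / c.re := by
  have hδ : (w - c) * (w + c) = δ := by linear_combination h
  rcases le_or_gt 0 w.re with hw | hw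
  · refine ⟨1, .inl rfl, ?_⟩
    have hwc : c.re ≤ ‖w + c‖ :=
      calc c.re ≤ (w + c).re := by rw [add_re]; linarith
        _ ≤ ‖w + c‖ := re_le_norm _
    rw [one_mul, le_div_iff₀ hc, ← hδ, norm_mul]
    gcongr
  · refine ⟨-1, .inr rfl, ?_⟩
    have hwc : c.re ≤ ‖w - c‖ :=
      calc c.re ≤ (c - w).re := by rw [sub_re]; linarith
        _ ≤ ‖c - w‖ := re_le_norm _
        _ = ‖w - c‖ := norm_sub_rev _ _
    rw [neg_one_mul, sub_neg_eq_add, le_div_iff₀ hc, ← hδ, norm_mul, mul_comm ‖w - c‖]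
    gcongr

theorem min_one_mul_one_add_le_one_add_mul (k : ℝ) {x : ℝ} (hx : 0 ≤ x) :
    min 1 k * (1 + x) ≤ 1 + k * x := by
  nlinarith [min_le_left 1 k, min_le_right 1 k]

theorem sqrt_mul_sqrt_le_re_one_sub_mul_I_cpow_half {k : ℝ} (hk : 0 ≤ k) (t : ℝ) :
    √(min 1 k / 2) * √(1 + |t|) ≤ ((1 - k * t * I) ^ (1 / 2 : ℂ)).re := by
  have hre : (1 - k * t * I).re = 1 := by simp
  have him : |(1 - k * t * I).im| = k * |t| := by simp [abs_mul, abs_of_nonneg hk]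
  rw [one_div, cpow_inv_two_re, ← Real.sqrt_mul (by positivity)]
  apply Real.sqrt_le_sqrt
  calc min 1 k / 2 * (1 + |t|) ≤ (1 + k * |t|) / 2 := by
        linarith [min_one_mul_one_add_le_one_add_mul k (abs_nonneg t)]
    _ ≤ _ := by rw [hre, ← him]; linarith [abs_im_le_norm (1 - k * t * I)]

theorem sub_sq_eq_sq_add_of_quadratic {μ σ2 γ s u : ℝ} {v E : ℂ} (hμ : 0 < μ) (hσ : 0 < σ2)
    (hγ : 0 < γ) (hs : 0 < s)
    (hrel : ((σ2 / (2 * μ) : ℝ) : ℂ) * v ^ 2 - ((γ / √s : ℝ) : ℂ) * v + I * u / s = E) :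
    (v - ((γ * μ / (σ2 * √s) : ℝ) : ℂ)) ^ 2 =
      (((γ * μ / (σ2 * √s) : ℝ) : ℂ) * (1 - 2 * I * u * σ2 / (γ ^ 2 * μ)) ^ (1 / 2 : ℂ)) ^ 2 +
        E / ((σ2 / (2 * μ) : ℝ) : ℂ) := by
  have hsqrt : ((√s : ℝ) : ℂ) ^ 2 = s := by norm_cast; exact Real.sq_sqrt hs.le
  have : ((√s : ℝ) : ℂ) ≠ 0 := by exact_mod_cast (Real.sqrt_pos.mpr hs).ne'
  have : (μ : ℂ) ≠ 0 := by exact_mod_cast hμ.ne'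
  have : (σ2 : ℂ) ≠ 0 := by exact_mod_cast hσ.ne'
  have : (γ : ℂ) ≠ 0 := by exact_mod_cast hγ.ne'
  rw [mul_pow, one_div, cpow_ofNat_inv_pow, ← hrel, ← hsqrt]
  push_cast
  field_simp
  ring

theorem completing_square_general (μ σ2 γ : ℝ) (hμ : 0 < μ) (hσ : 0 < σ2) (hγ : 0 < γ)
    (v E : ℝ → ℂ) (u : ℝ → ℝ)
    (hrel : ∀ s : ℝ, 0 < s →
      ((σ2 / (2 * μ) : ℝ) : ℂ) * (v s) ^ 2 - ((γ / Real.sqrt s : ℝ) : ℂ) * v s +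
        Complex.I * (u s) / s = E s)
    (hE : ∃ C : ℝ, ∀ s : ℝ, 1 ≤ s →
      ‖E s‖ ≤ C * (‖v s‖ ^ 2 / Real.sqrt s + ‖v s‖ ^ 3)) :
    ∃ C : ℝ, ∀ᶠ s in atTop, ∃ ε : ℂ, (ε = 1 ∨ ε = -1) ∧
      ‖v s - (((γ * μ / (σ2 * Real.sqrt s) : ℝ) : ℂ) +
          ε * ((γ * μ / (σ2 * Real.sqrt s) : ℝ) : ℂ) *
            (1 - 2 * Complex.I * (u s) * σ2 / (γ ^ 2 * μ)) ^ (1 / 2 : ℂ))‖ ≤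
        C * (‖v s‖ ^ 2 + ‖v s‖ ^ 3 * Real.sqrt s) / Real.sqrt (1 + |u s|) := by
  obtain ⟨C, hC⟩ := hE
  set m : ℝ := min 1 (2 * σ2 / (γ ^ 2 * μ)) / 2
  have hm : 0 < m := by positivity
  refine ⟨2 * C / (γ * √m), ?_⟩
  filter_upwards [eventually_ge_atTop 1] with s hs
  have hs0 : 0 < s := one_pos.trans_le hs
  have hsqrt : 0 < √s := Real.sqrt_pos.mpr hs0
  set r : ℝ := γ * μ / (σ2 * √s)
  set W : ℂ := (1 - 2 * I * (u s) * σ2 / (γ ^ 2 * μ)) ^ (1 / 2 : ℂ)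
  have hWre : √m * √(1 + |u s|) ≤ W.re := by
    convert sqrt_mul_sqrt_le_re_one_sub_mul_I_cpow_half (k := 2 * σ2 / (γ ^ 2 * μ))
      (by positivity) (u s) using 3
    push_cast; ring
  have hrW : 0 < (r * W).re := by
    rw [re_ofReal_mul]
    exact mul_pos (by positivity) (hWre.trans_lt' (by positivity))
  obtain ⟨ε, hε, hle⟩ := exists_sign_norm_sub_le_of_sq_eq_sq_add
    (sub_sq_eq_sq_add_of_quadratic hμ hσ hγ hs0 (hrel s hs0)) hrW
  refine ⟨ε, hε, ?_⟩
  calc ‖v s - (r + ε * r * W)‖ = ‖v s - r - ε * (r * W)‖ := by ring_nf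
    _ ≤ ‖E s / ((σ2 / (2 * μ) : ℝ) : ℂ)‖ / (r * W).re := hle
    _ ≤ ‖E s‖ / (σ2 / (2 * μ)) / (r * (√m * √(1 + |u s|))) := by
      rw [norm_div, norm_real, Real.norm_of_nonneg (by positivity), re_ofReal_mul]
      gcongr
    _ ≤ C * (‖v s‖ ^ 2 / √s + ‖v s‖ ^ 3) / (σ2 / (2 * μ)) / (r * (√m * √(1 + |u s|))) := by
      gcongr
      exact hC s hs
    _ = _ := by
      simp only [r]
      field_simp

/-- Completing-the-square step (A.7)–(A.8): if `v = v(s)` satisfies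
`(σ²/2μ)v² - (γ/√s)v + iu/s = E` with `E = O(v²/√s) + O(v³)` and `|u| = o(s)`, then
`v = (γμ/(σ²√s))(1 ± (1 - 2iuσ²/(γ²μ))^{1/2}) + O((|v|² + |v|³√s)/√(1+|u|))`. -/
theorem completing_square (μ σ2 γ : ℝ) (hμ : 0 < μ) (hσ : 0 < σ2) (hγ : 0 < γ)
    (v E : ℝ → ℂ) (u : ℝ → ℝ)
    (hrel : ∀ s : ℝ, 0 < s →
      ((σ2 / (2 * μ) : ℝ) : ℂ) * (v s) ^ 2 - ((γ / Real.sqrt s : ℝ) : ℂ) * v s +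
        Complex.I * (u s) / s = E s)
    (hE : ∃ C : ℝ, ∀ s : ℝ, 1 ≤ s →
      ‖E s‖ ≤ C * (‖v s‖ ^ 2 / Real.sqrt s + ‖v s‖ ^ 3))
    (hu : (fun s => u s) =o[atTop] fun s : ℝ => s) :
    ∃ C : ℝ, ∀ᶠ s in atTop, ∃ ε : ℂ, (ε = 1 ∨ ε = -1) ∧
      ‖v s - (((γ * μ / (σ2 * Real.sqrt s) : ℝ) : ℂ) +
          ε * ((γ * μ / (σ2 * Real.sqrt s) : ℝ) : ℂ) *
            (1 - 2 * Complex.I * (u s) * σ2 / (γ ^ 2 * μ)) ^ (1 / 2 : ℂ))‖ ≤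
        C * (‖v s‖ ^ 2 + ‖v s‖ ^ 3 * Real.sqrt s) / Real.sqrt (1 + |u s|) :=
  completing_square_general μ σ2 γ hμ hσ hγ v E u hrel hE
end
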